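/- Let R be a real orthogonal n×n matrix and let x₀, x_* ∈ ℝ^n with x₀ - x_* orthogonal to the eigenspace of R for eigenvalue 1. Suppose the eigenvalues of R are e^{iθ_l} with |θ_l| ≤ π. Then the averages (1/N) Σ_{j=0}^{N-1} (x_* + R^j(x₀ - x_*)) converge to x_* as N → ∞, with ‖(1/N) Σ_{j=0}^{N-1} R^j (x₀ - x_*)‖ ≤ (π/(N · min_{θ_l ≠ 0} |θ_l|)) ‖x₀ - x_*‖. -/

import Mathlib

/-!
Write `T` for the isometry `x ↦ R x` of Euclidean space and `v = x₀ - x_*`. As `T` preserves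
inner products, `1 - T` maps the orthogonal complement of the fixed space `K = ker (1 - T)` into
itself, injectively, hence onto; so `v = u - T u` for some `u ⊥ K`. The sums then telescope,
`∑_{j<N} T^j v = u - T^N u`, so they are bounded by `2‖u‖` and the averages tend to `0`.

For the rate: `(1 - T)ᵀ(1 - T)` is the matrix `2 - R - Rᵀ`, and multiplying
`μ - (2 - R - Rᵀ)` by `R` gives `R² - (2 - μ) R + 1`. For an eigenvalue `μ`, the spectral
mapping theorem makes this polynomial vanish at some eigenvalue `e^{iθ_l}` of `R`, so
`μ = 2 - 2 cos θ_l = 4 sin² (θ_l / 2)`, which by Jordan's inequality is either `0` or at least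
`(2c/π)²`. Expanding `u ⊥ K` in an eigenbasis gives `(2c/π) ‖u‖ ≤ ‖u - T u‖ = ‖v‖`.
-/

open Matrix

def toE {n : ℕ} (v : Fin n → ℝ) : EuclideanSpace ℝ (Fin n) := WithLp.toLp 2 v

open LinearMap Module Filter Topology Function Polynomial Real
open scoped InnerProductSpace

theorem Real.sq_two_mul_div_pi_le_two_sub_two_mul_cos {θ : ℝ} (hθ : |θ| ≤ π) :
    (2 * θ / π) ^ 2 ≤ 2 - 2 * cos θ := by
  have hjordan : 2 / π * (|θ| / 2) ≤ sin (|θ| / 2) :=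
    mul_le_sin (by positivity) (by linarith)
  have hcos : 2 - 2 * cos θ = (2 * sin (|θ| / 2)) ^ 2 := by
    have h := cos_two_mul' (|θ| / 2)
    rw [show 2 * (|θ| / 2) = |θ| by ring, cos_abs] at h
    linear_combination -2 * h - 2 * sin_sq_add_cos_sq (|θ| / 2)
  rw [hcos, ← sq_abs (2 * θ / π), abs_div, abs_mul, abs_two, abs_of_pos pi_pos]
  gcongr
  calc 2 * |θ| / π = 2 * (2 / π * (|θ| / 2)) := by ring
    _ ≤ _ := by gcongr

open Complex in
theorem Complex.eq_two_sub_two_mul_cos_of_exp_isRoot {θ μ : ℝ}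
    (h : exp (θ * I) ^ 2 - (2 - μ) * exp (θ * I) + 1 = 0) :
    μ = 2 - 2 * Real.cos θ := by
  have hexp : exp (θ * I) * exp (-θ * I) = 1 := by
    rw [← Complex.exp_add]; simp
  have : (2 * Real.cos θ : ℂ) = 2 - μ := by
    push_cast
    rw [two_cos]
    linear_combination exp (-θ * I) * h - (exp (θ * I) - (2 - μ)) * hexp
  exact_mod_cast (by linear_combination this : (μ : ℂ) = 2 - 2 * Real.cos θ)

theorem Matrix.mul_algebraMap_sub_one_sub_transpose_mul_eq_aeval {ι K : Type*} [Fintype ι]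
    [DecidableEq ι] [CommRing K] {S : Matrix ι ι K} (hS : S * Sᵀ = 1) (μ : K) :
    S * (algebraMap K _ μ - (1 - S)ᵀ * (1 - S)) = aeval S (X ^ 2 - C (2 - μ) * X + 1) := by
  simp only [map_add, map_sub, map_mul, map_pow, aeval_X, aeval_C, map_one,
    Algebra.algebraMap_eq_smul_one, transpose_sub, transpose_one, mul_sub, sub_mul, mul_one,
    one_mul]
  rw [← mul_assoc S, hS, one_mul]
  simp only [smul_mul_assoc, mul_smul_comm, one_mul, mul_one, sq]
  module

theorem Matrix.exists_eq_two_sub_two_mul_cos_of_mem_spectrum {ι : Type*} [Fintype ι]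
    [DecidableEq ι] {R : Matrix ι ι ℝ} (hR : R * Rᵀ = 1) {θ : ι → ℝ}
    (hev : (R.map Complex.ofReal).charpoly = ∏ l, (X - C (Complex.exp (θ l * Complex.I))))
    {μ : ℝ} (hμ : μ ∈ spectrum ℝ ((1 - R)ᵀ * (1 - R))) :
    ∃ l, μ = 2 - 2 * Real.cos (θ l) := by
  set f := Complex.ofRealHom.mapMatrix (m := ι)
  have hfT (M : Matrix ι ι ℝ) : f Mᵀ = (f M)ᵀ := rfl
  set S := f R with hSdef
  have hS : S * Sᵀ = 1 := by rw [hSdef, ← hfT, ← map_mul, hR, map_one]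
  have hμS : (μ : ℂ) ∈ spectrum ℂ ((1 - S)ᵀ * (1 - S)) := by
    rw [mem_spectrum_iff_isRoot_charpoly] at hμ ⊢
    have := hμ.map (f := Complex.ofRealHom)
    rw [← charpoly_map] at this
    change (f _).charpoly.IsRoot _ at this
    rwa [map_mul, hfT, map_sub, map_one] at this
  set p : ℂ[X] := X ^ 2 - C (2 - (μ : ℂ)) * X + 1
  have hp : ¬ IsUnit (aeval S p) := by
    rw [← mul_algebraMap_sub_one_sub_transpose_mul_eq_aeval hS]
    intro hunit
    refine spectrum.mem_iff.mp hμS ?_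
    have hSt : IsUnit Sᵀ := ⟨⟨Sᵀ, S, mul_eq_one_comm.mp hS, hS⟩, rfl⟩
    simpa [← mul_assoc, mul_eq_one_comm.mp hS] using hSt.mul hunit
  have hdeg : 0 < p.degree := by
    rw [show p.degree = 2 by unfold p; compute_degree!]
    exact zero_lt_two
  obtain ⟨z, hz, hpz⟩ : (0 : ℂ) ∈ (eval · p) '' spectrum ℂ S := by
    rw [← spectrum.map_polynomial_aeval_of_degree_pos _ p hdeg]
    exact spectrum.zero_mem_iff ℂ |>.mpr hp
  rw [mem_spectrum_iff_isRoot_charpoly, show S = R.map Complex.ofReal from rfl, hev, IsRoot,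
    eval_prod, Finset.prod_eq_zero_iff] at hz
  obtain ⟨l, -, hl⟩ := hz
  refine ⟨l, Complex.eq_two_sub_two_mul_cos_of_exp_isRoot ?_⟩
  rw [eval_sub, eval_X, eval_C, sub_eq_zero] at hl
  simpa [p, hl] using hpz

theorem LinearMap.sum_range_pow_apply_sub_apply {𝕜 M : Type*} [Ring 𝕜] [AddCommGroup M]
    [Module 𝕜 M] (T : M →ₗ[𝕜] M) (u : M) (N : ℕ) :
    ∑ j ∈ Finset.range N, (T ^ j) (u - T u) = u - (T ^ N) u := by
  have hstep (j : ℕ) : (T ^ j) (u - T u) = (T ^ j) u - (T ^ (j + 1)) u := by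
    rw [map_sub, pow_succ, End.mul_apply]
  simp_rw [hstep, Finset.sum_range_sub', pow_zero, End.one_apply]

theorem LinearMap.norm_sum_range_pow_apply_sub_apply_le {𝕜 E : Type*} [Ring 𝕜]
    [SeminormedAddCommGroup E] [Module 𝕜 E] {T : E →ₗ[𝕜] E} (hT : ∀ x, ‖T x‖ ≤ ‖x‖) (u : E)
    (N : ℕ) :
    ‖∑ j ∈ Finset.range N, (T ^ j) (u - T u)‖ ≤ 2 * ‖u‖ := by
  have hpow : ‖(T ^ N) u‖ ≤ ‖u‖ := by
    induction N with
    | zero => simp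
    | succ N ih => rw [pow_succ', End.mul_apply]; exact (hT _).trans ih
  rw [sum_range_pow_apply_sub_apply]
  linarith [norm_sub_le u ((T ^ N) u)]

theorem tendsto_smul_sum_range_add_of_norm_sum_le {E : Type*} [NormedAddCommGroup E]
    [NormedSpace ℝ E] (x : E) {f : ℕ → E} {C : ℝ}
    (hf : ∀ N, ‖∑ j ∈ Finset.range N, f j‖ ≤ C) :
    Tendsto (fun N : ℕ => (1 / (N : ℝ)) • ∑ j ∈ Finset.range N, (x + f j)) atTop (𝓝 x) := by
  have hmean :
      Tendsto (fun N : ℕ => (1 / (N : ℝ)) • ∑ j ∈ Finset.range N, f j) atTop (𝓝 0) := by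
    refine squeeze_zero_norm (fun N => ?_) (tendsto_const_div_atTop_nhds_zero_nat C)
    rw [norm_smul, Real.norm_of_nonneg (by positivity), one_div, inv_mul_eq_div]
    exact div_le_div_of_nonneg_right (hf N) N.cast_nonneg
  refine (by simpa using hmean.const_add x : Tendsto _ _ _).congr' ?_
  filter_upwards [eventually_ne_atTop 0] with N hN
  rw [Finset.sum_add_distrib, smul_add, Finset.sum_const, Finset.card_range,
    ← Nat.cast_smul_eq_nsmul ℝ, smul_smul, one_div, inv_mul_cancel₀ (Nat.cast_ne_zero.mpr hN),
    one_smul]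

section InnerProduct

variable {E F : Type*} [NormedAddCommGroup E] [InnerProductSpace ℝ E] [FiniteDimensional ℝ E]
  [NormedAddCommGroup F] [InnerProductSpace ℝ F] [FiniteDimensional ℝ F]

theorem LinearMap.exists_mem_orthogonal_ker_sub_apply_eq {T : E →ₗ[ℝ] E}
    (hT : ∀ x, ‖T x‖ = ‖x‖) {v : E} (hv : v ∈ (ker (1 - T))ᗮ) :
    ∃ u ∈ (ker (1 - T))ᗮ, u - T u = v := by
  set K := ker (1 - T)
  have hmaps : ∀ x ∈ Kᗮ, (1 - T) x ∈ Kᗮ := by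
    intro x _ w hw
    have hTw : T w = w := (sub_eq_zero.mp (by simpa [K] using hw)).symm
    rw [sub_apply, End.one_apply, inner_sub_right, ← (norm_map_iff_inner_map_map T).mp hT w x,
      hTw, sub_self]
  have hinj : Injective ((1 - T).restrict hmaps) := by
    rw [← ker_eq_bot, Submodule.eq_bot_iff]
    rintro ⟨x, hx⟩ hx0
    have hxK : x ∈ K := congrArg Subtype.val hx0
    ext
    exact inner_self_eq_zero.mp (Submodule.inner_right_of_mem_orthogonal hxK hx)
  obtain ⟨⟨u, hu⟩, huv⟩ := injective_iff_surjective.mp hinj ⟨v, hv⟩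
  exact ⟨u, hu, congrArg Subtype.val huv⟩

theorem LinearMap.IsSymmetric.mul_norm_sq_le_inner_self_of_mem_orthogonal_ker
    {B : E →ₗ[ℝ] E} (hB : B.IsSymmetric) {m : ℝ}
    (hm : ∀ μ, End.HasEigenvalue B μ → μ = 0 ∨ m ≤ μ) {u : E} (hu : u ∈ (ker B)ᗮ) :
    m * ‖u‖ ^ 2 ≤ ⟪B u, u⟫_ℝ := by
  set e := hB.eigenvectorBasis rfl
  set μ := hB.eigenvalues rfl
  have heig (i) : B (e i) = μ i • e i := hB.apply_eigenvectorBasis rfl i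
  have hnorm : ‖u‖ ^ 2 = ∑ i, ⟪e i, u⟫_ℝ ^ 2 := by
    rw [← real_inner_self_eq_norm_sq, ← e.sum_inner_mul_inner u u]
    simp_rw [real_inner_comm u, sq]
  have hquad : ⟪B u, u⟫_ℝ = ∑ i, μ i * ⟪e i, u⟫_ℝ ^ 2 := by
    rw [← e.sum_inner_mul_inner (B u) u]
    refine Finset.sum_congr rfl fun i _ => ?_
    rw [hB, heig, real_inner_smul_right, real_inner_comm u, sq, mul_assoc]
  rw [hnorm, hquad, Finset.mul_sum]
  refine Finset.sum_le_sum fun i _ => ?_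
  rcases hm (μ i) (hB.hasEigenvalue_eigenvalues rfl i) with hzero | hle
  · have hker : e i ∈ ker B := by rw [mem_ker, heig, hzero, zero_smul]
    simp [Submodule.inner_right_of_mem_orthogonal hker hu, hzero]
  · exact mul_le_mul_of_nonneg_right hle (sq_nonneg _)

theorem LinearMap.mul_norm_le_norm_apply_of_mem_orthogonal_ker (S : E →ₗ[ℝ] F) {σ : ℝ}
    (hσ : 0 ≤ σ) (hS : ∀ μ, End.HasEigenvalue (adjoint S ∘ₗ S) μ → μ = 0 ∨ σ ^ 2 ≤ μ)
    {u : E} (hu : u ∈ (ker S)ᗮ) : σ * ‖u‖ ≤ ‖S u‖ := by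
  have := (isSymmetric_adjoint_comp_self S).mul_norm_sq_le_inner_self_of_mem_orthogonal_ker hS
    (by rwa [ker_adjoint_comp_self])
  rw [comp_apply, adjoint_inner_left, real_inner_self_eq_norm_sq, ← mul_pow] at this
  exact (pow_le_pow_iff_left₀ (by positivity) (norm_nonneg _) two_ne_zero).mp this

end InnerProduct

section OrthogonalMatrix

variable {ι : Type*} [Fintype ι] [DecidableEq ι]

theorem Matrix.norm_toEuclideanLin_apply {R : Matrix ι ι ℝ} (hR : R * Rᵀ = 1)
    (x : EuclideanSpace ℝ ι) : ‖toEuclideanLin R x‖ = ‖x‖ := by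
  have hRR : adjoint (toEuclideanLin R) * toEuclideanLin R = 1 := by
    rw [← toEuclideanLin_conjTranspose_eq_adjoint, End.mul_eq_comp, ← toLpLin_mul_same,
      conjTranspose_eq_transpose_of_trivial, mul_eq_one_comm.mp hR, toLpLin_one]
    rfl
  refine (norm_map_iff_inner_map_map _).mpr (fun x y => ?_) x
  rw [← adjoint_inner_left, ← End.mul_apply, hRR, End.one_apply]

theorem Matrix.adjoint_one_sub_toEuclideanLin_comp (R : Matrix ι ι ℝ) :
    adjoint (1 - toEuclideanLin R) ∘ₗ (1 - toEuclideanLin R) =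
      toEuclideanLin ((1 - R)ᵀ * (1 - R)) := by
  have hsub : toEuclideanLin (1 - R) = 1 - toEuclideanLin R := by
    rw [map_sub, toLpLin_one]; rfl
  rw [toLpLin_mul_same, ← conjTranspose_eq_transpose_of_trivial,
    toEuclideanLin_conjTranspose_eq_adjoint, hsub]

theorem Matrix.eq_zero_or_le_of_hasEigenvalue_adjoint_one_sub_comp {R : Matrix ι ι ℝ}
    (hR : R * Rᵀ = 1) {θ : ι → ℝ} (hθ : ∀ l, |θ l| ≤ π)
    (hev : (R.map Complex.ofReal).charpoly = ∏ l, (X - C (Complex.exp (θ l * Complex.I))))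
    {c : ℝ} (hc : 0 ≤ c) (hmin : ∀ l, θ l ≠ 0 → c ≤ |θ l|) {μ : ℝ}
    (hμ : End.HasEigenvalue (adjoint (1 - toEuclideanLin R) ∘ₗ (1 - toEuclideanLin R)) μ) :
    μ = 0 ∨ (2 * c / π) ^ 2 ≤ μ := by
  rw [adjoint_one_sub_toEuclideanLin_comp, End.hasEigenvalue_iff_mem_spectrum,
    spectrum_toLpLin] at hμ
  obtain ⟨l, rfl⟩ := exists_eq_two_sub_two_mul_cos_of_mem_spectrum hR hev hμ
  by_cases hl : θ l = 0
  · simp [hl]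
  refine Or.inr (le_trans ?_ (sq_two_mul_div_pi_le_two_sub_two_mul_cos (hθ l)))
  rw [← sq_abs (2 * θ l / π), abs_div, abs_mul, abs_two, abs_of_pos pi_pos]
  gcongr
  exact hmin l hl

end OrthogonalMatrix

/-- if `R` is orthogonal with eigenvalues `e^{iθ_l}` (`|θ_l| ≤ π`)
and `x₀ - x_*` is orthogonal to the fixed space of `R`, then the averages
`(1/N) Σ_{j<N} (x_* + R^j(x₀ - x_*))` converge to `x_*`, with the quantitative
bound `‖(1/N) Σ_{j<N} R^j(x₀-x_*)‖ ≤ (π/(N·min_{θ_l≠0}|θ_l|))‖x₀-x_*‖`. -/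
theorem average_converges_to_center (n : ℕ)
    (R : Matrix (Fin n) (Fin n) ℝ) (hR : R * Rᵀ = 1)
    (θ : Fin n → ℝ) (hθ : ∀ l, |θ l| ≤ Real.pi)
    (hev : (R.map (Complex.ofReal)).charpoly =
      ∏ l, (Polynomial.X - Polynomial.C (Complex.exp (θ l * Complex.I))))
    (x0 xstar : EuclideanSpace ℝ (Fin n))
    (horth : ∀ w : EuclideanSpace ℝ (Fin n), R.mulVec w = w →
      (inner ℝ (x0 - xstar) w : ℝ) = 0) :
    Filter.Tendsto
      (fun N : ℕ => (1 / (N : ℝ)) •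
        ∑ j ∈ Finset.range N, (xstar + toE ((R ^ j).mulVec (x0 - xstar))))
      Filter.atTop (nhds xstar) ∧
    ∀ c : ℝ, 0 < c → (∀ l, θ l ≠ 0 → c ≤ |θ l|) → ∀ N : ℕ, 1 ≤ N →
      ‖(1 / (N : ℝ)) • toE (∑ j ∈ Finset.range N, (R ^ j).mulVec (x0 - xstar))‖ ≤
        (Real.pi / ((N : ℝ) * c)) * ‖x0 - xstar‖ := by
  set T := toEuclideanLin R
  have hT : ∀ x, ‖T x‖ = ‖x‖ := norm_toEuclideanLin_apply hR
  have hpow (j : ℕ) : toE ((R ^ j) *ᵥ (x0 - xstar)) = (T ^ j) (x0 - xstar) := by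
    rw [← toLpLin_pow]; rfl
  have hfix : x0 - xstar ∈ (ker (1 - T))ᗮ := (Submodule.mem_orthogonal' _ _).mpr fun w hw =>
    horth w (congrArg WithLp.ofLp (sub_eq_zero.mp (by simpa using hw)).symm)
  obtain ⟨u, hu, huv⟩ := exists_mem_orthogonal_ker_sub_apply_eq hT hfix
  have hbound (N : ℕ) : ‖∑ j ∈ Finset.range N, toE ((R ^ j) *ᵥ (x0 - xstar))‖ ≤ 2 * ‖u‖ := by
    simpa only [hpow, huv] using norm_sum_range_pow_apply_sub_apply_le (fun x => (hT x).le) u N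
  refine ⟨tendsto_smul_sum_range_add_of_norm_sum_le xstar hbound, fun c hc hmin N _ => ?_⟩
  have hgap : 2 * c / π * ‖u‖ ≤ ‖x0 - xstar‖ :=
    huv ▸ (1 - T).mul_norm_le_norm_apply_of_mem_orthogonal_ker (by positivity)
      (fun _ => eq_zero_or_le_of_hasEigenvalue_adjoint_one_sub_comp hR hθ hev hc.le hmin) hu
  calc ‖(1 / (N : ℝ)) • toE (∑ j ∈ Finset.range N, (R ^ j) *ᵥ (x0 - xstar))‖
      = 1 / N * ‖∑ j ∈ Finset.range N, toE ((R ^ j) *ᵥ (x0 - xstar))‖ := by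
        rw [norm_smul, Real.norm_of_nonneg (by positivity), toE, WithLp.toLp_sum]
        rfl
    _ ≤ 1 / N * (2 * ‖u‖) := by gcongr; exact hbound N
    _ = π / (N * c) * (2 * c / π * ‖u‖) := by field_simp
    _ ≤ π / (N * c) * ‖x0 - xstar‖ := by gcongr
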